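/- For every fixed integer n ≥ 1, the empiric stochastic probabilities converge uniformly to the zero-noise empiric probabilities as the noise level tends to zero: for every ρ > 0 there exists ε₀ > 0 such that dist*(σ_{ε,n,x}, σ_{n,x}) < ρ for all 0 < ε ≤ ε₀ and all x ∈ M. -/

import Mathlib

open MeasureTheory Metric Set Filter Topology
open scoped ENNReal NNReal

namespace EmpStoch

variable {M : Type*} [MetricSpace M] [MeasurableSpace M] [BorelSpace M]

/-- The Dirac probability measure `δ_x` at a point `x`. -/
noncomputable def diracProb (x : M) : ProbabilityMeasure M :=
  ⟨MeasureTheory.Measure.dirac x, inferInstance⟩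

/-- `dstar` is a metric on the space `𝓜` of Borel probability measures which is
compatible with (i.e. metrizes) the weak* topology. -/
def MetrizesWeakStar (dstar : ProbabilityMeasure M → ProbabilityMeasure M → ℝ) : Prop :=
  (∀ μ ν, dstar μ ν = 0 ↔ μ = ν) ∧
  (∀ μ ν, dstar μ ν = dstar ν μ) ∧
  (∀ μ ν ξ, dstar μ ξ ≤ dstar μ ν + dstar ν ξ) ∧
  (∀ (μ : ProbabilityMeasure M) (s : Set (ProbabilityMeasure M)),
      s ∈ nhds μ ↔ ∃ ρ > (0 : ℝ), {ν | dstar ν μ < ρ} ⊆ s)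

/-- `P ε x` is the transition probability `p_ε(x,·)`, i.e. for every `ε > 0`, every `x`
and every Borel set `A`, `p_ε(x,A) = m(A ∩ B_ε(f x)) / m(B_ε(f x))`. -/
def IsTransitionKernel (f : M → M) (m : Measure M)
    (P : ℝ → M → ProbabilityMeasure M) : Prop :=
  ∀ ε > (0 : ℝ), ∀ (x : M) (A : Set M), MeasurableSet A →
    (P ε x : Measure M) A = m (A ∩ Metric.ball (f x) ε) / m (Metric.ball (f x) ε)

/-- `Lop ε` is the dual transfer operator `L*_ε : 𝓜 → 𝓜`, characterized by
`∫ φ d(L*_ε μ) = ∫ (∫ φ(y) p_ε(x,dy)) dμ(x)` for every continuous `φ`. -/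
def IsDualTransfer (P : ℝ → M → ProbabilityMeasure M)
    (Lop : ℝ → ProbabilityMeasure M → ProbabilityMeasure M) : Prop :=
  ∀ ε > (0 : ℝ), ∀ (μ : ProbabilityMeasure M) (φ : C(M, ℝ)),
    ∫ y, φ y ∂(Lop ε μ : Measure M) = ∫ x, (∫ y, φ y ∂(P ε x : Measure M)) ∂(μ : Measure M)

/-- `S ε n x` is the empiric stochastic probability
`σ_{ε,n,x} = (1/n) ∑_{j=1}^n (L*_ε)^j δ_x`. -/
def IsEmpiricStochastic (Lop : ℝ → ProbabilityMeasure M → ProbabilityMeasure M)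
    (S : ℝ → ℕ → M → ProbabilityMeasure M) : Prop :=
  ∀ ε > (0 : ℝ), ∀ n : ℕ, 1 ≤ n → ∀ x : M,
    (S ε n x : Measure M) =
      (n : ℝ≥0∞)⁻¹ • ∑ j ∈ Finset.range n, ((Lop ε)^[j + 1] (diracProb x) : Measure M)

/-- `S0 n x` is the zero-noise empiric probability `σ_{n,x} = (1/n) ∑_{j=1}^n δ_{f^j x}`. -/
def IsEmpiricZeroNoise (f : M → M) (S0 : ℕ → M → ProbabilityMeasure M) : Prop :=
  ∀ n : ℕ, 1 ≤ n → ∀ x : M,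
    (S0 n x : Measure M) =
      (n : ℝ≥0∞)⁻¹ • ∑ j ∈ Finset.range n, MeasureTheory.Measure.dirac (f^[j + 1] x)

/-- `pω_x`: the set of all weak* limits of convergent subsequences of `(σ_{n,x})_{n ≥ 1}`. -/
def pOmega (S0 : ℕ → M → ProbabilityMeasure M) (x : M) : Set (ProbabilityMeasure M) :=
  {ν | ∃ φ : ℕ → ℕ, StrictMono φ ∧ (∀ i, 1 ≤ φ i) ∧
    Tendsto (fun i => S0 (φ i) x) atTop (nhds ν)}

/-- The strong basin of statistical attraction `A_μ = {x : pω_x = {μ}}`. -/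
def strongBasin (S0 : ℕ → M → ProbabilityMeasure M) (μ : ProbabilityMeasure M) : Set M :=
  {x | pOmega S0 x = {μ}}

/-- The `ρ`-weak basin of statistical attraction
`A^ρ_μ = {x : dist*(pω_x, μ) < ρ}`. -/
def weakBasin (dstar : ProbabilityMeasure M → ProbabilityMeasure M → ℝ)
    (S0 : ℕ → M → ProbabilityMeasure M) (ρ : ℝ) (μ : ProbabilityMeasure M) : Set M :=
  {x | ∃ ν ∈ pOmega S0 x, dstar ν μ < ρ}

/-- The basin of empiric stochastic stability `Â_μ` of a measure `μ`. -/
def empBasin (dstar : ProbabilityMeasure M → ProbabilityMeasure M → ℝ)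
    (S : ℝ → ℕ → M → ProbabilityMeasure M) (μ : ProbabilityMeasure M) : Set M :=
  {x | ∀ ρ > (0 : ℝ), ∃ N : ℕ, ∀ n ≥ N, ∃ ε₀ > (0 : ℝ), ∀ ε : ℝ, 0 < ε → ε ≤ ε₀ →
    dstar (S ε n x) μ < ρ}

/-- `μ` is `f`-invariant: `f_* μ = μ`. -/
def IsInvariant (f : M → M) (μ : ProbabilityMeasure M) : Prop :=
  (μ : Measure M).map f = (μ : Measure M)

/-- An `f`-invariant measure `μ` is physical if its strong basin of statistical
attraction has positive `m`-measure. -/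
def Physical (f : M → M) (m : Measure M) (S0 : ℕ → M → ProbabilityMeasure M)
    (μ : ProbabilityMeasure M) : Prop :=
  IsInvariant f μ ∧ 0 < m (strongBasin S0 μ)

/-- An `f`-invariant measure `μ` is pseudo-physical if all its `ρ`-weak basins of
statistical attraction have positive `m`-measure. -/
def PseudoPhysical (f : M → M) (m : Measure M)
    (dstar : ProbabilityMeasure M → ProbabilityMeasure M → ℝ)
    (S0 : ℕ → M → ProbabilityMeasure M) (μ : ProbabilityMeasure M) : Prop :=
  IsInvariant f μ ∧ ∀ ρ > (0 : ℝ), 0 < m (weakBasin dstar S0 ρ μ)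

/-- A probability measure `μ` is empirically stochastically stable. -/
def EmpStochStable (m : Measure M)
    (dstar : ProbabilityMeasure M → ProbabilityMeasure M → ℝ)
    (S : ℝ → ℕ → M → ProbabilityMeasure M) (μ : ProbabilityMeasure M) : Prop :=
  ∃ A : Set M, MeasurableSet A ∧ 0 < m A ∧
    ∀ ρ > (0 : ℝ), ∃ N : ℕ, ∀ n ≥ N, ∃ ε₀ > (0 : ℝ), ∀ ε : ℝ, 0 < ε → ε ≤ ε₀ →
      ∀ᵐ x ∂m, x ∈ A → dstar (S ε n x) μ < ρ

/-- `μ` is globally empirically stochastically stable: it is empirically stochastically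
stable and its basin `Â_μ` has full `m`-measure. -/
def GloballyEmpStochStable (m : Measure M)
    (dstar : ProbabilityMeasure M → ProbabilityMeasure M → ℝ)
    (S : ℝ → ℕ → M → ProbabilityMeasure M) (μ : ProbabilityMeasure M) : Prop :=
  EmpStochStable m dstar S μ ∧ m (empBasin dstar S μ)ᶜ = 0

/-- `dist*(σ, K) := inf_{μ ∈ K} dist*(σ, μ)` (a minimum when `K` is compact). -/
noncomputable def dstarSet (dstar : ProbabilityMeasure M → ProbabilityMeasure M → ℝ)
    (σ : ProbabilityMeasure M) (K : Set (ProbabilityMeasure M)) : ℝ :=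
  sInf ((fun μ => dstar σ μ) '' K)

/-- The basin of empiric stochastic stability `Â_K` of a set of measures `K`. -/
noncomputable def empBasinSet (dstar : ProbabilityMeasure M → ProbabilityMeasure M → ℝ)
    (S : ℝ → ℕ → M → ProbabilityMeasure M) (K : Set (ProbabilityMeasure M)) : Set M :=
  {x | ∀ ρ > (0 : ℝ), ∃ N : ℕ, ∀ n ≥ N, ∃ ε₀ > (0 : ℝ), ∀ ε : ℝ, 0 < ε → ε ≤ ε₀ →
    dstarSet dstar (S ε n x) K < ρ}

/-- The strong basin of statistical attraction `A_K = {x : pω_x ⊆ K}` of a set `K`. -/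
def strongBasinSet (S0 : ℕ → M → ProbabilityMeasure M)
    (K : Set (ProbabilityMeasure M)) : Set M :=
  {x | pOmega S0 x ⊆ K}

/-- A nonempty weak*-compact set `K` of `f`-invariant measures is empirically
stochastically stable: (a) uniform approximation on a positive-measure set, and
(b) minimality with respect to the basins. -/
noncomputable def EmpStochStableSet (f : M → M) (m : Measure M)
    (dstar : ProbabilityMeasure M → ProbabilityMeasure M → ℝ)
    (S : ℝ → ℕ → M → ProbabilityMeasure M) (K : Set (ProbabilityMeasure M)) : Prop :=
  K.Nonempty ∧ IsCompact K ∧ (∀ μ ∈ K, IsInvariant f μ) ∧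
  (∃ A : Set M, MeasurableSet A ∧ 0 < m A ∧
    ∀ ρ > (0 : ℝ), ∃ N : ℕ, ∀ n ≥ N, ∃ ε₀ > (0 : ℝ), ∀ ε : ℝ, 0 < ε → ε ≤ ε₀ →
      ∀ x ∈ A, dstarSet dstar (S ε n x) K < ρ) ∧
  (∀ K' : Set (ProbabilityMeasure M), K'.Nonempty → IsCompact K' →
    (∀ μ ∈ K', IsInvariant f μ) →
    m (empBasinSet dstar S K \ empBasinSet dstar S K') = 0 → K ⊆ K')

/-- `K` is globally empirically stochastically stable: it is empirically stochastically
stable and its basin `Â_K` has full `m`-measure. -/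
noncomputable def GloballyEmpStochStableSet (f : M → M) (m : Measure M)
    (dstar : ProbabilityMeasure M → ProbabilityMeasure M → ℝ)
    (S : ℝ → ℕ → M → ProbabilityMeasure M) (K : Set (ProbabilityMeasure M)) : Prop :=
  EmpStochStableSet f m dstar S K ∧ m (empBasinSet dstar S K)ᶜ = 0


/-
For a continuous test function `ψ`, one step of `L*_ε` replaces `ψ` by its average over the
ball `B_ε(f x)`, which is within the `ε`-oscillation of `ψ` of `ψ (f x)`. Since `M` is compact
this oscillation tends to `0` uniformly, so by induction `∫ ψ d((L*_ε)^j μ) → ∫ ψ ∘ f^j dμ`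
uniformly in `μ`, and hence `∫ ψ dσ_{ε,n,x} → ∫ ψ dσ_{n,x}` uniformly in `x` as `ε → 0⁺`.
The ball averages are continuous in the centre because spheres are `m`-null, which makes all
integrands continuous. Finally `x ↦ σ_{n,x}` is weak* continuous, and compactness of `M` turns
this uniform weak* convergence into uniform convergence for `dist*`.
-/

lemma tendstoUniformly_finset_sum {ι κ α β : Type*} [AddCommGroup β] [UniformSpace β]
    [IsUniformAddGroup β] {l : Filter ι} {F : κ → ι → α → β} {f : κ → α → β} (s : Finset κ)
    (h : ∀ k ∈ s, TendstoUniformly (F k) (f k) l) :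
    TendstoUniformly (fun i x => ∑ k ∈ s, F k i x) (fun x => ∑ k ∈ s, f k x) l := by
  classical
  induction s using Finset.induction_on with
  | empty => exact fun u hu => .of_forall fun _ _ => by simpa using refl_mem_uniformity hu
  | insert a s ha ih =>
    simp only [Finset.sum_insert ha]
    exact (h a (Finset.mem_insert_self a s)).add
      (ih fun k hk => h k (Finset.mem_insert_of_mem hk))

lemma abs_integral_sub_integral_le {α : Type*} [MeasurableSpace α] {μ : Measure α}
    [IsProbabilityMeasure μ] {g h : α → ℝ} (hg : Integrable g μ) (hh : Integrable h μ) {η : ℝ}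
    (hgh : ∀ᵐ x ∂μ, |g x - h x| ≤ η) : |∫ x, g x ∂μ - ∫ x, h x ∂μ| ≤ η := by
  rw [← integral_sub hg hh]
  simpa using norm_integral_le_of_norm_le_const (μ := μ) (f := fun x => g x - h x) hgh

open scoped BoundedContinuousFunction in
lemma tendsto_prod_nhds_of_tendstoUniformly_integral {ι X Ω : Type*} [TopologicalSpace X]
    [TopologicalSpace Ω] [MeasurableSpace Ω] [OpensMeasurableSpace Ω] {l : Filter ι}
    {F : ι → X → ProbabilityMeasure Ω} {G : X → ProbabilityMeasure Ω} (hG : Continuous G)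
    (hF : ∀ g : Ω →ᵇ ℝ,
      TendstoUniformly (fun i x => ∫ ω, g ω ∂(F i x)) (fun x => ∫ ω, g ω ∂(G x)) l)
    (x₀ : X) : Tendsto (fun p : ι × X => F p.1 p.2) (l ×ˢ 𝓝 x₀) (𝓝 (G x₀)) := by
  refine ProbabilityMeasure.tendsto_iff_forall_integral_tendsto.2 fun g => ?_
  have hFg : TendstoUniformly (fun (p : ι × X) x => ∫ ω, g ω ∂(F p.1 x))
      (fun x => ∫ ω, g ω ∂(G x)) (l ×ˢ 𝓝 x₀) :=
    fun u hu => (hF g u hu).prod_inl _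
  exact hFg.tendsto_comp
    ((ProbabilityMeasure.continuous_integral_boundedContinuousFunction g).comp hG).continuousAt
    tendsto_snd

lemma MetrizesWeakStar.eventually_forall_lt {ι X : Type*} [TopologicalSpace X] [CompactSpace X]
    {dstar : ProbabilityMeasure M → ProbabilityMeasure M → ℝ} (hd : MetrizesWeakStar dstar)
    {l : Filter ι} {F : ι → X → ProbabilityMeasure M} {G : X → ProbabilityMeasure M}
    (hG : Continuous G) (hF : ∀ x₀, Tendsto (fun p : ι × X => F p.1 p.2) (l ×ˢ 𝓝 x₀) (𝓝 (G x₀)))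
    {ρ : ℝ} (hρ : 0 < ρ) : ∀ᶠ i in l, ∀ x, dstar (F i x) (G x) < ρ := by
  obtain ⟨-, hsymm, htri, hnhds⟩ := hd
  have hball : ∀ μ, ∀ᶠ ν in 𝓝 μ, dstar ν μ < ρ / 2 := fun μ =>
    (hnhds μ _).2 ⟨ρ / 2, half_pos hρ, subset_rfl⟩
  have hloc : ∀ x₀, ∀ᶠ p in l ×ˢ 𝓝 x₀, dstar (F p.1 p.2) (G p.2) < ρ := fun x₀ => by
    filter_upwards [hF x₀ (hball _), tendsto_snd (hG.tendsto x₀ (hball _))]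
      with p (h1 : dstar _ _ < ρ / 2) (h2 : dstar _ _ < ρ / 2)
    linarith [htri (F p.1 p.2) (G x₀) (G p.2), hsymm (G x₀) (G p.2)]
  have := isCompact_univ.mem_prod_nhdsSet_of_forall fun x₀ _ => hloc x₀
  rw [nhdsSet_univ, ← principal_univ] at this
  simpa using eventually_prod_principal_iff.1 this

lemma continuous_setIntegral_ball {m : Measure M} {ε : ℝ} (hsph : ∀ z, m (sphere z ε) = 0)
    {g : M → ℝ} (hg : Integrable g m) : Continuous fun z => ∫ y in ball z ε, g y ∂m := by
  simp_rw [← integral_indicator measurableSet_ball]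
  refine continuous_iff_continuousAt.2 fun z => tendsto_integral_filter_of_dominated_convergence
    (fun y => ‖g y‖) (.of_forall fun _ => hg.aestronglyMeasurable.indicator measurableSet_ball)
    (.of_forall fun _ => .of_forall fun y => norm_indicator_le_norm_self g y) hg.norm ?_
  filter_upwards [measure_eq_zero_iff_ae_notMem.1 (hsph z)] with y hy
  have hswap : ∀ z', (ball z' ε).indicator g y = (ball y ε).indicator (fun _ => g y) z' :=
    fun z' => by simp only [indicator, mem_ball, dist_comm]
  simp_rw [hswap]
  exact continuousOn_const.continuousAt_indicator
    fun h => hy (mem_sphere_comm.1 (frontier_ball_subset_sphere h))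

lemma continuous_setAverage_ball {m : Measure M} [IsFiniteMeasure m] {ε : ℝ}
    (hsph : ∀ z, m (sphere z ε) = 0) (hball : ∀ z, m (ball z ε) ≠ 0) {g : M → ℝ}
    (hg : Integrable g m) : Continuous fun z => ⨍ y in ball z ε, g y ∂m := by
  have hvol : Continuous fun z => m.real (ball z ε) := by
    simpa using continuous_setIntegral_ball hsph (integrable_const (1 : ℝ))
  simp_rw [setAverage_eq, smul_eq_mul]
  exact (hvol.inv₀ fun z => (measureReal_ne_zero_iff (measure_ne_top m _)).2 (hball z)).mul
    (continuous_setIntegral_ball hsph hg)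

section RandomPerturbation

variable {f : M → M} {m : Measure M} {P : ℝ → M → ProbabilityMeasure M}
  {Lop : ℝ → ProbabilityMeasure M → ProbabilityMeasure M}

omit [BorelSpace M] in
lemma IsTransitionKernel.coe_eq (hP : IsTransitionKernel f m P) {ε : ℝ} (hε : 0 < ε) (x : M) :
    (P ε x : Measure M) = (m (ball (f x) ε))⁻¹ • m.restrict (ball (f x) ε) := by
  ext s hs
  rw [hP ε hε x s hs, Measure.smul_apply, Measure.restrict_apply hs, smul_eq_mul,
    ENNReal.div_eq_inv_mul]

omit [BorelSpace M] in
lemma IsTransitionKernel.integral_eq (hP : IsTransitionKernel f m P) {ε : ℝ} (hε : 0 < ε)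
    (x : M) (ψ : M → ℝ) : ∫ y, ψ y ∂(P ε x : Measure M) = ⨍ y in ball (f x) ε, ψ y ∂m := by
  rw [hP.coe_eq hε, setAverage_eq']

lemma IsTransitionKernel.ae_mem_ball (hP : IsTransitionKernel f m P) {ε : ℝ} (hε : 0 < ε)
    (x : M) : ∀ᵐ y ∂(P ε x : Measure M), y ∈ ball (f x) ε := by
  rw [hP.coe_eq hε]
  exact Measure.ae_smul_measure (ae_restrict_mem measurableSet_ball) _

variable [CompactSpace M]

lemma IsDualTransfer.tendstoUniformly_integral (hf : Continuous f) [IsFiniteMeasure m]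
    (hball : ∀ (z : M) (r : ℝ), 0 < r → 0 < m (ball z r))
    (hsph : ∀ (z : M) (r : ℝ), m (sphere z r) = 0) (hP : IsTransitionKernel f m P)
    (hL : IsDualTransfer P Lop) (χ : C(M, ℝ)) :
    TendstoUniformly (fun ε μ => ∫ y, χ y ∂(Lop ε μ : Measure M))
      (fun μ : ProbabilityMeasure M => ∫ x, χ (f x) ∂(μ : Measure M)) (𝓝[>] 0) := by
  have hint : ∀ {g : M → ℝ} (μ : Measure M) [IsFiniteMeasure μ], Continuous g → Integrable g μ :=
    fun _ _ hg => hg.integrable_of_hasCompactSupport (.of_compactSpace _)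
  rw [Metric.tendstoUniformly_iff]
  intro η hη
  obtain ⟨δ, hδ, hχ⟩ := Metric.uniformContinuous_iff.1
    (CompactSpace.uniformContinuous_of_continuous χ.continuous) (η / 2) (half_pos hη)
  filter_upwards [Ioo_mem_nhdsGT hδ] with ε ⟨hε, hεδ⟩ μ
  have hstep : ∀ x, |∫ y, χ y ∂(P ε x : Measure M) - χ (f x)| ≤ η / 2 := fun x => by
    simpa using abs_integral_sub_integral_le (hint _ χ.continuous) (integrable_const (χ (f x)))
      ((hP.ae_mem_ball hε x).mono fun y hy => (hχ (hy.trans hεδ)).le)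
  have hcont : Continuous fun x => ∫ y, χ y ∂(P ε x : Measure M) := by
    simp_rw [hP.integral_eq hε]
    exact (continuous_setAverage_ball (hsph · ε) (fun z => (hball z ε hε).ne')
      (hint m χ.continuous)).comp hf
  rw [hL ε hε μ χ, dist_comm, Real.dist_eq]
  exact (abs_integral_sub_integral_le (hint _ hcont) (hint _ (χ.continuous.comp hf))
    (.of_forall hstep)).trans_lt (half_lt_self hη)

lemma IsDualTransfer.tendstoUniformly_integral_iterate (hf : Continuous f) [IsFiniteMeasure m]
    (hball : ∀ (z : M) (r : ℝ), 0 < r → 0 < m (ball z r))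
    (hsph : ∀ (z : M) (r : ℝ), m (sphere z r) = 0) (hP : IsTransitionKernel f m P)
    (hL : IsDualTransfer P Lop) (ψ : C(M, ℝ)) (j : ℕ) :
    TendstoUniformly (fun ε μ => ∫ y, ψ y ∂((Lop ε)^[j] μ : Measure M))
      (fun μ : ProbabilityMeasure M => ∫ x, ψ (f^[j] x) ∂(μ : Measure M)) (𝓝[>] 0) := by
  induction j with
  | zero => exact fun u hu => .of_forall fun _ _ => refl_mem_uniformity hu
  | succ j ih =>
    rw [Metric.tendstoUniformly_iff] at ih ⊢
    intro η hη
    have hone := Metric.tendstoUniformly_iff.1 (hL.tendstoUniformly_integral hf hball hsph hP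
      (ψ.comp ⟨f^[j], hf.iterate j⟩)) (η / 2) (half_pos hη)
    filter_upwards [ih _ (half_pos hη), hone] with ε hiter hstep μ
    simp only [Function.iterate_succ_apply]
    calc _ ≤ _ := dist_triangle _ (∫ x, ψ (f^[j] x) ∂(Lop ε μ : Measure M)) _
      _ < η / 2 + η / 2 := add_lt_add (hstep μ) (hiter (Lop ε μ))
      _ = η := add_halves η

lemma IsEmpiricStochastic.integral_eq {S : ℝ → ℕ → M → ProbabilityMeasure M}
    (hS : IsEmpiricStochastic Lop S) {ε : ℝ} (hε : 0 < ε) {n : ℕ} (hn : 1 ≤ n) (x : M)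
    (ψ : C(M, ℝ)) :
    ∫ y, ψ y ∂(S ε n x : Measure M)
      = (n : ℝ)⁻¹ *
          ∑ j ∈ Finset.range n, ∫ y, ψ y ∂((Lop ε)^[j + 1] (diracProb x) : Measure M) := by
  rw [hS ε hε n hn x, integral_smul_measure, integral_finsetSum_measure fun j _ =>
    ψ.continuous.integrable_of_hasCompactSupport (.of_compactSpace _)]
  simp [smul_eq_mul]

lemma IsEmpiricZeroNoise.integral_eq {S0 : ℕ → M → ProbabilityMeasure M}
    (hS0 : IsEmpiricZeroNoise f S0) {n : ℕ} (hn : 1 ≤ n) (x : M) (ψ : C(M, ℝ)) :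
    ∫ y, ψ y ∂(S0 n x : Measure M) = (n : ℝ)⁻¹ * ∑ j ∈ Finset.range n, ψ (f^[j + 1] x) := by
  rw [hS0 n hn x, integral_smul_measure, integral_finsetSum_measure fun j _ =>
    ψ.continuous.integrable_of_hasCompactSupport (.of_compactSpace _)]
  simp [smul_eq_mul]

lemma IsEmpiricZeroNoise.continuous {S0 : ℕ → M → ProbabilityMeasure M} (hf : Continuous f)
    (hS0 : IsEmpiricZeroNoise f S0) {n : ℕ} (hn : 1 ≤ n) : Continuous (S0 n) := by
  refine ProbabilityMeasure.continuous_iff_forall_continuousMap_continuous_integral.2 fun ψ => ?_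
  simp_rw [hS0.integral_eq hn]
  exact continuous_const.mul (continuous_finsetSum _ fun j _ => ψ.continuous.comp (hf.iterate _))

lemma tendstoUniformly_integral_empiric (hf : Continuous f) [IsFiniteMeasure m]
    (hball : ∀ (z : M) (r : ℝ), 0 < r → 0 < m (ball z r))
    (hsph : ∀ (z : M) (r : ℝ), m (sphere z r) = 0) (hP : IsTransitionKernel f m P)
    (hL : IsDualTransfer P Lop) {S : ℝ → ℕ → M → ProbabilityMeasure M}
    (hS : IsEmpiricStochastic Lop S) {S0 : ℕ → M → ProbabilityMeasure M}
    (hS0 : IsEmpiricZeroNoise f S0) {n : ℕ} (hn : 1 ≤ n) (ψ : C(M, ℝ)) :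
    TendstoUniformly (fun ε x => ∫ y, ψ y ∂(S ε n x : Measure M))
      (fun x => ∫ y, ψ y ∂(S0 n x : Measure M)) (𝓝[>] 0) := by
  have hterm : ∀ j, TendstoUniformly
      (fun ε x => ∫ y, ψ y ∂((Lop ε)^[j + 1] (diracProb x) : Measure M))
      (fun x => ψ (f^[j + 1] x)) (𝓝[>] 0) := fun j => by
    simpa [Function.comp_def, diracProb] using
      (hL.tendstoUniformly_integral_iterate hf hball hsph hP ψ (j + 1)).comp diracProb
  have hsum := (uniformContinuous_id.const_mul' ((n : ℝ)⁻¹)).comp_tendstoUniformly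
    (tendstoUniformly_finset_sum (Finset.range n) fun j _ => hterm j)
  simp_rw [hS0.integral_eq hn]
  refine (tendstoUniformly_congr ?_).1 hsum
  filter_upwards [self_mem_nhdsWithin] with ε hε
  funext x
  exact (hS.integral_eq hε hn x ψ).symm

end RandomPerturbation

theorem statement_5 {M : Type*} [MetricSpace M] [CompactSpace M] [MeasurableSpace M]
    [BorelSpace M] (f : M → M) (hf : Continuous f)
    (m : Measure M) [IsFiniteMeasure m]
    (hball : ∀ (z : M) (r : ℝ), 0 < r → 0 < m (Metric.ball z r))
    (hsph : ∀ (z : M) (r : ℝ), m (Metric.sphere z r) = 0)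
    (P : ℝ → M → ProbabilityMeasure M) (hP : IsTransitionKernel f m P)
    (Lop : ℝ → ProbabilityMeasure M → ProbabilityMeasure M) (hL : IsDualTransfer P Lop)
    (S : ℝ → ℕ → M → ProbabilityMeasure M) (hS : IsEmpiricStochastic Lop S)
    (S0 : ℕ → M → ProbabilityMeasure M) (hS0 : IsEmpiricZeroNoise f S0)
    (dstar : ProbabilityMeasure M → ProbabilityMeasure M → ℝ) (hd : MetrizesWeakStar dstar) :
    ∀ n : ℕ, 1 ≤ n → ∀ ρ > (0 : ℝ), ∃ ε₀ > (0 : ℝ), ∀ ε : ℝ, 0 < ε → ε ≤ ε₀ →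
      ∀ x : M, dstar (S ε n x) (S0 n x) < ρ := by
  intro n hn ρ hρ
  have hlim := tendsto_prod_nhds_of_tendstoUniformly_integral (hS0.continuous hf hn) fun g =>
    tendstoUniformly_integral_empiric hf hball hsph hP hL hS hS0 hn g.toContinuousMap
  obtain ⟨ε₀, hε₀, hclose⟩ := mem_nhdsGT_iff_exists_Ioc_subset.1
    (hd.eventually_forall_lt (F := fun ε => S ε n) (hS0.continuous hf hn) hlim hρ)
  exact ⟨ε₀, hε₀, fun ε hε hεε₀ => hclose ⟨hε, hεε₀⟩⟩

end EmpStoch
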